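/- Let Φ be an Orlicz function and ρ : Y^Φ → ℝ law invariant over a nonatomic probability space. If the induced map R_ρ on laws is sequentially continuous for Φ-weak convergence, then ρ is order continuous on Y^Φ. -/

import Mathlib

/-! Dominated a.s. convergence implies Φ-weak convergence, by dominated convergence applied
to `f ∘ Xₙ` for bounded continuous `f` (dominated by `‖f‖`) and to `Φ ∘ |Xₙ|` (dominated by
`Φ ∘ |Y|`); the latter needs continuity of `x ↦ Φ |x|`, which holds because it is convex on
all of `ℝ`. -/

open MeasureTheory Filter

structure IsOrliczFunction (Φ : ℝ → ℝ) : Prop where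
  convexOn : ConvexOn ℝ (Set.Ici 0) Φ
  monotoneOn : MonotoneOn Φ (Set.Ici 0)
  map_zero : Φ 0 = 0
  nonconst : ∃ x : ℝ, 0 ≤ x ∧ Φ x ≠ 0

theorem ConvexOn.comp_norm {E : Type*} [SeminormedAddCommGroup E] [NormedSpace ℝ E]
    {Φ : ℝ → ℝ} (hconv : ConvexOn ℝ (Set.Ici 0) Φ) (hmono : MonotoneOn Φ (Set.Ici 0)) :
    ConvexOn ℝ Set.univ (fun x : E => Φ ‖x‖) := by
  refine ⟨convex_univ, fun x _ y _ a b ha hb hab => ?_⟩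
  calc Φ ‖a • x + b • y‖ ≤ Φ (a • ‖x‖ + b • ‖y‖) :=
        hmono (norm_nonneg _) (hconv.1 (norm_nonneg x) (norm_nonneg y) ha hb hab) <| by
          simpa [norm_smul, abs_of_nonneg ha, abs_of_nonneg hb] using norm_add_le (a • x) (b • y)
    _ ≤ a • Φ ‖x‖ + b • Φ ‖y‖ := hconv.2 (norm_nonneg x) (norm_nonneg y) ha hb hab

theorem tendsto_integral_comp_of_ae_tendsto {Ω : Type*} [MeasurableSpace Ω] {μ : Measure Ω}
    {g : ℝ → ℝ} (hg : Continuous g) {X : ℕ → Ω → ℝ} {X₀ : Ω → ℝ}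
    (hX : ∀ n, AEMeasurable (X n) μ) {G : Ω → ℝ} (hG : Integrable G μ)
    (hbound : ∀ n, ∀ᵐ ω ∂μ, ‖g (X n ω)‖ ≤ G ω)
    (hlim : ∀ᵐ ω ∂μ, Tendsto (fun n => X n ω) atTop (nhds (X₀ ω))) :
    Tendsto (fun n => ∫ ω, g (X n ω) ∂μ) atTop (nhds (∫ ω, g (X₀ ω) ∂μ)) :=
  tendsto_integral_of_dominated_convergence G
    (fun n => hg.comp_aestronglyMeasurable (hX n).aestronglyMeasurable) hG hbound
    (hlim.mono fun _ hω => (hg.tendsto _).comp hω)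

namespace IsOrliczFunction

variable {Φ : ℝ → ℝ}

theorem nonneg (hΦ : IsOrliczFunction Φ) {x : ℝ} (hx : 0 ≤ x) : 0 ≤ Φ x :=
  hΦ.map_zero ▸ hΦ.monotoneOn Set.self_mem_Ici hx hx

theorem continuous_comp_abs (hΦ : IsOrliczFunction Φ) : Continuous (fun x => Φ |x|) := by
  simpa only [Real.norm_eq_abs, continuousOn_univ] using
    (hΦ.convexOn.comp_norm (E := ℝ) hΦ.monotoneOn).continuousOn isOpen_univ

theorem comp_abs_le_comp_abs (hΦ : IsOrliczFunction Φ) {x y : ℝ} (h : |x| ≤ |y|) :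
    Φ |x| ≤ Φ |y| :=
  hΦ.monotoneOn (abs_nonneg x) (abs_nonneg y) h

end IsOrliczFunction

theorem PhiWeak_continuous_implies_orderContinuous_general
    {Ω : Type*} [MeasurableSpace Ω] (μ : Measure Ω) [IsProbabilityMeasure μ]
    (Φ : ℝ → ℝ) (hΦ : IsOrliczFunction Φ)
    (ρ : (Ω → ℝ) → ℝ)
    (hPhiWeak : ∀ (X : ℕ → Ω → ℝ) (X₀ : Ω → ℝ),
      (∀ n, Measurable (X n)) → Measurable X₀ →
      (∀ n, Integrable (fun ω => Φ (|X n ω|)) μ) →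
      Integrable (fun ω => Φ (|X₀ ω|)) μ →
      (∀ f : BoundedContinuousFunction ℝ ℝ,
        Tendsto (fun n => ∫ ω, f (X n ω) ∂μ) atTop (nhds (∫ ω, f (X₀ ω) ∂μ))) →
      Tendsto (fun n => ∫ ω, Φ (|X n ω|) ∂μ) atTop (nhds (∫ ω, Φ (|X₀ ω|) ∂μ)) →
      Tendsto (fun n => ρ (X n)) atTop (nhds (ρ X₀))) :
    ∀ (X : ℕ → Ω → ℝ) (X₀ : Ω → ℝ),
      (∀ n, Measurable (X n)) → Measurable X₀ →
      (∀ n, Integrable (fun ω => Φ (|X n ω|)) μ) →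
      Integrable (fun ω => Φ (|X₀ ω|)) μ →
      (∀ᵐ ω ∂μ, Tendsto (fun n => X n ω) atTop (nhds (X₀ ω))) →
      (∃ Y : Ω → ℝ, Integrable (fun ω => Φ (|Y ω|)) μ ∧
        ∀ n, ∀ᵐ ω ∂μ, |X n ω| ≤ Y ω) →
      Tendsto (fun n => ρ (X n)) atTop (nhds (ρ X₀)) := by
  intro X X₀ hXm hX₀m hint hint₀ hlim ⟨Y, hYint, hYdom⟩
  have hXae : ∀ n, AEMeasurable (X n) μ := fun n => (hXm n).aemeasurable
  refine hPhiWeak X X₀ hXm hX₀m hint hint₀ (fun f => ?_) ?_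
  · exact tendsto_integral_comp_of_ae_tendsto f.continuous hXae (integrable_const ‖f‖)
      (fun n => Eventually.of_forall fun ω => f.norm_coe_le_norm _) hlim
  · refine tendsto_integral_comp_of_ae_tendsto hΦ.continuous_comp_abs hXae hYint
      (fun n => ?_) hlim
    filter_upwards [hYdom n] with ω hω
    rw [Real.norm_of_nonneg (hΦ.nonneg (abs_nonneg _))]
    exact hΦ.comp_abs_le_comp_abs (hω.trans (le_abs_self _))

/-- If the induced map on laws of a law-invariant functional `ρ` on the Young
class `Y^Φ` over a nonatomic probability space is sequentially continuous for
Φ-weak convergence, then `ρ` is order continuous on `Y^Φ`. -/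
theorem PhiWeak_continuous_implies_orderContinuous
    {Ω : Type*} [MeasurableSpace Ω] (μ : Measure Ω) [IsProbabilityMeasure μ]
    [MeasureTheory.NullSingletonClass μ]
    (Φ : ℝ → ℝ) (hΦ : IsOrliczFunction Φ)
    (ρ : (Ω → ℝ) → ℝ)
    (hlaw : ∀ X Y : Ω → ℝ, Measurable X → Measurable Y →
      Integrable (fun ω => Φ (|X ω|)) μ → Integrable (fun ω => Φ (|Y ω|)) μ →
      μ.map X = μ.map Y → ρ X = ρ Y)
    (hPhiWeak : ∀ (X : ℕ → Ω → ℝ) (X₀ : Ω → ℝ),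
      (∀ n, Measurable (X n)) → Measurable X₀ →
      (∀ n, Integrable (fun ω => Φ (|X n ω|)) μ) →
      Integrable (fun ω => Φ (|X₀ ω|)) μ →
      (∀ f : BoundedContinuousFunction ℝ ℝ,
        Tendsto (fun n => ∫ ω, f (X n ω) ∂μ) atTop (nhds (∫ ω, f (X₀ ω) ∂μ))) →
      Tendsto (fun n => ∫ ω, Φ (|X n ω|) ∂μ) atTop (nhds (∫ ω, Φ (|X₀ ω|) ∂μ)) →
      Tendsto (fun n => ρ (X n)) atTop (nhds (ρ X₀))) :
    ∀ (X : ℕ → Ω → ℝ) (X₀ : Ω → ℝ),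
      (∀ n, Measurable (X n)) → Measurable X₀ →
      (∀ n, Integrable (fun ω => Φ (|X n ω|)) μ) →
      Integrable (fun ω => Φ (|X₀ ω|)) μ →
      (∀ᵐ ω ∂μ, Tendsto (fun n => X n ω) atTop (nhds (X₀ ω))) →
      (∃ Y : Ω → ℝ, Integrable (fun ω => Φ (|Y ω|)) μ ∧
        ∀ n, ∀ᵐ ω ∂μ, |X n ω| ≤ Y ω) →
      Tendsto (fun n => ρ (X n)) atTop (nhds (ρ X₀)) :=
  PhiWeak_continuous_implies_orderContinuous_general μ Φ hΦ ρ hPhiWeak
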